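/- Greedy peeling invariant: Let F₀ ⊇ F₁ ⊇ ... be obtained by repeatedly removing a vertex of minimum incident weight. If F is any vertex set and F ⊆ F₀, then at the first step i where the removed vertex v belongs to F, we have I_F(v) ≤ I_{F_i}(v) ≤ 2·W(F_i)/|F_i|. -/
import Mathlib


open Finset

/-- Total weight of edges inside `S` (each unordered pair counted once,
assuming `w` is symmetric). -/
noncomputable def Wgt {V : Type*} [DecidableEq V] (w : V → V → ℝ) (S : Finset V) : ℝ :=
  (∑ x ∈ S, ∑ y ∈ S \ {x}, w x y) / 2

/-- Average similarity `α(S) = W(S)/|S|`. -/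
noncomputable def alphaW {V : Type*} [DecidableEq V] (w : V → V → ℝ) (S : Finset V) : ℝ :=
  Wgt w S / S.card

/-- Total incident weight `I_S(v)` of `v` towards `S`. -/
noncomputable def inc {V : Type*} [DecidableEq V] (w : V → V → ℝ) (S : Finset V) (v : V) : ℝ :=
  ∑ t ∈ S \ {v}, w v t

theorem stmt_7 {V : Type*} [DecidableEq V] (w : V → V → ℝ)
    (hnn : ∀ u v, 0 ≤ w u v) (hsym : ∀ u v, w u v = w v u)
    (F Fi : Finset V) (hsub : F ⊆ Fi) (v : V) (hvF : v ∈ F) (hvFi : v ∈ Fi)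
    (hmin : ∀ u ∈ Fi, inc w Fi v ≤ inc w Fi u) :
    inc w F v ≤ inc w Fi v ∧ inc w Fi v ≤ 2 * Wgt w Fi / Fi.card := by
  constructor
  · exact Finset.sum_le_sum_of_subset_of_nonneg (sdiff_subset_sdiff hsub (le_refl _))
      (fun t _ _ => hnn v t)
  · have hcardpos : (0:ℝ) < Fi.card := by
      exact_mod_cast Finset.card_pos.mpr ⟨v, hvFi⟩
    have hsum : (Fi.card : ℝ) * inc w Fi v ≤ ∑ u ∈ Fi, inc w Fi u := by
      calc (Fi.card : ℝ) * inc w Fi v = ∑ _u ∈ Fi, inc w Fi v := by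
            rw [Finset.sum_const, nsmul_eq_mul]
        _ ≤ ∑ u ∈ Fi, inc w Fi u := Finset.sum_le_sum hmin
    have hW : ∑ u ∈ Fi, inc w Fi u = 2 * Wgt w Fi := by
      unfold inc Wgt; ring
    rw [le_div_iff₀ hcardpos]
    rw [hW] at hsum
    linarith
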